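/- If v₁, v₂, …, v_k with v₁ = s and v_k = t is a Hamiltonian s-t path in G (so k = |V|), then the sequence (v₁,1),(v₁,2),(v₂,1),(v₂,2),…,(v_k,1),(v_k,2) is a directed Hamiltonian path in Ḡ from (s,1) to (t,2). -/

import Mathlib

/-- The directed graph Ḡ on `V × Bool` (`false` = first copy, `true` = second copy):
edges `(v,1) → (v,2)` for every `v`, and `(i,2) → (j,1)` whenever `{i,j} ∈ E`. -/
def DbarAdj {V : Type*} (G : SimpleGraph V) : V × Bool → V × Bool → Prop :=
  fun a b =>
    (a.2 = false ∧ b.2 = true ∧ b.1 = a.1) ∨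
    (a.2 = true ∧ b.2 = false ∧ G.Adj a.1 b.1)

/-- The sequence `(v₁,1),(v₁,2),(v₂,1),(v₂,2),…` obtained from `v₁,v₂,…`. -/
def doubleList {V : Type*} (vs : List V) : List (V × Bool) :=
  (vs.map fun v => [(v, false), (v, true)]).flatten

theorem List.Nodup.length_eq_card {α : Type*} [Fintype α] {l : List α} (hl : l.Nodup)
    (hall : ∀ x, x ∈ l) : l.length = Fintype.card α := by
  classical
  rw [← List.toFinset_card_of_nodup hl,
    Finset.eq_univ_iff_forall.2 fun x => List.mem_toFinset.2 (hall x), Finset.card_univ]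

section doubleList

variable {V : Type*}

@[simp]
lemma doubleList_nil : doubleList ([] : List V) = [] := rfl

@[simp]
lemma doubleList_cons (v : V) (l : List V) :
    doubleList (v :: l) = (v, false) :: (v, true) :: doubleList l := rfl

@[simp]
lemma mem_doubleList {vs : List V} {x : V × Bool} : x ∈ doubleList vs ↔ x.1 ∈ vs := by
  induction vs with
  | nil => simp
  | cons v l ih => obtain ⟨a, _ | _⟩ := x <;> simp_all [Prod.ext_iff]

lemma nodup_doubleList {vs : List V} (h : vs.Nodup) : (doubleList vs).Nodup := by
  induction vs with
  | nil => simp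
  | cons v l ih =>
    rw [List.nodup_cons] at h
    simp [h.1, ih h.2]

lemma isChain_doubleList {G : SimpleGraph V} {vs : List V} (h : vs.IsChain G.Adj) :
    (doubleList vs).IsChain (DbarAdj G) := by
  induction vs with
  | nil => simp
  | cons v l ih =>
    have hv : DbarAdj G (v, false) (v, true) := Or.inl ⟨rfl, rfl, rfl⟩
    cases l with
    | nil => simpa using hv
    | cons w m =>
      rw [List.isChain_cons_cons] at h
      exact .cons_cons hv <| .cons_cons (Or.inr ⟨rfl, rfl, h.1⟩) (ih h.2)

lemma head?_doubleList (vs : List V) : (doubleList vs).head? = vs.head?.map (·, false) := by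
  cases vs <;> rfl

lemma getLast?_doubleList (vs : List V) :
    (doubleList vs).getLast? = vs.getLast?.map (·, true) := by
  induction vs with
  | nil => rfl
  | cons v l ih =>
    cases l with
    | nil => rfl
    | cons w m =>
      rw [List.getLast?_cons_cons, ← ih, doubleList_cons, List.getLast?_cons_cons,
        doubleList_cons, List.getLast?_cons_cons]

end doubleList

theorem stmt2_general {V : Type*} [Fintype V] (G : SimpleGraph V)
    (s t : V) (vs : List V)
    (hchain : vs.Chain' G.Adj) (hnodup : vs.Nodup)
    (hhead : vs.head? = some s) (hlast : vs.getLast? = some t)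
    (hall : ∀ v : V, v ∈ vs) :
    vs.length = Fintype.card V ∧
    (doubleList vs).Chain' (DbarAdj G) ∧ (doubleList vs).Nodup ∧
    (doubleList vs).head? = some (s, false) ∧
    (doubleList vs).getLast? = some (t, true) ∧
    (∀ x : V × Bool, x ∈ doubleList vs) := by
  refine ⟨hnodup.length_eq_card hall, isChain_doubleList hchain, nodup_doubleList hnodup,
    ?_, ?_, fun x => mem_doubleList.2 (hall x.1)⟩
  · rw [head?_doubleList, hhead, Option.map_some]
  · rw [getLast?_doubleList, hlast, Option.map_some]

/-- If `v₁,…,v_k` with `v₁ = s`, `v_k = t` is a Hamiltonian `s`-`t` path in `G`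
(so `k = |V|`), then `(v₁,1),(v₁,2),…,(v_k,1),(v_k,2)` is a directed Hamiltonian path
in `Ḡ` from `(s,1)` to `(t,2)`: a directed path (consecutive pairs are edges of `Ḡ`,
vertices pairwise distinct) visiting every vertex of `V × {1,2}` exactly once. -/
theorem stmt2 {V : Type*} [Fintype V] [DecidableEq V] (G : SimpleGraph V)
    (s t : V) (hst : s ≠ t) (vs : List V)
    (hchain : vs.Chain' G.Adj) (hnodup : vs.Nodup)
    (hhead : vs.head? = some s) (hlast : vs.getLast? = some t)
    (hall : ∀ v : V, v ∈ vs) :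
    vs.length = Fintype.card V ∧
    (doubleList vs).Chain' (DbarAdj G) ∧ (doubleList vs).Nodup ∧
    (doubleList vs).head? = some (s, false) ∧
    (doubleList vs).getLast? = some (t, true) ∧
    (∀ x : V × Bool, x ∈ doubleList vs) :=
  stmt2_general G s t vs hchain hnodup hhead hlast hall
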